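/- arXiv:2510.27030 — 2 statements merged into one kernel-verified Lean document; each statement's English description precedes it below -/
import Mathlib

section
/- Let f be an (n,N,N) F-sequence with N < 2n−3. If f_{N,0} = f_{N,N}, then extending f by setting f_{N+1,0} = f_{N,N} − 1 yields an (n,N+1,0) F-sequence; otherwise, extending f by setting f_{N+1,0} to either max(0, f_{N,0} − 1) or f_{N,0} yields an (n,N+1,0) F-sequence. -/
/-- The lower bound `L_f(i,j)` used in the F-sequence constraints. -/
def Lb (f : ℤ → ℤ → ℤ) (i j : ℤ) : ℤ :=
  max (f i (j - 1)) (max (f (i - 1) j - 1)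
    (f i (j - 1) + f (i - 1) j - f (i - 1) (j - 1) - 1))

/-- The upper bound `U_f(i,j)` used in the F-sequence constraints. -/
def Ub (f : ℤ → ℤ → ℤ) (i j : ℤ) : ℤ :=
  min (f (i - 1) j) (f i (j - 1) + f (i - 1) j - f (i - 1) (j - 1))

/-- The index domain of an `(n,N,M)` F-sequence:
`{(i,j) : 0 ≤ j ≤ i ≤ N-1} ∪ {(N,j) : 0 ≤ j ≤ M}`. -/
def ValidIdx (N M i j : ℤ) : Prop :=
  (0 ≤ j ∧ j ≤ i ∧ i ≤ N - 1) ∨ (i = N ∧ 0 ≤ j ∧ j ≤ M)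

/-- An `(n,N,M)` **F**-sequence: a partially filled F-matrix, filled on the domain
`{(i,j) : 0 ≤ j ≤ i ≤ N-1} ∪ {(N,j) : 0 ≤ j ≤ M}` (and zero elsewhere). -/
structure IsFSeq (n N M : ℕ) (f : ℤ → ℤ → ℤ) : Prop where
  hMN : M ≤ N
  hN2n : (N : ℤ) ≤ 2 * (n : ℤ) - 3
  zero_outside : ∀ i j : ℤ, ¬ ValidIdx (N : ℤ) (M : ℤ) i j → f i j = 0
  nonneg : ∀ i j : ℤ, 0 ≤ f i j
  diag_pos : ∀ i : ℤ, 0 ≤ i → i ≤ max ((N : ℤ) - 1) (M : ℤ) → 0 < f i i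
  diag_first : f 0 0 = 2
  diag_step : ∀ i : ℤ, 1 ≤ i → i ≤ max ((N : ℤ) - 1) (M : ℤ) →
      f i i = f (i - 1) (i - 1) + 1 ∨ f i i = f (i - 1) (i - 1) - 1
  diag_bound : ∀ i : ℤ, 0 ≤ i → i ≤ max ((N : ℤ) - 1) (M : ℤ) →
      f i i ≤ 2 * (n : ℤ) - i - 2
  bounds : ∀ i j : ℤ, ValidIdx (N : ℤ) (M : ℤ) i j → 0 ≤ j → j ≤ i - 2 →
      Lb f i j ≤ f i j ∧ f i j ≤ Ub f i j
  special : ∀ i j : ℤ, ValidIdx (N : ℤ) (M : ℤ) i j → 0 ≤ j → j ≤ i - 1 →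
      f (i - 1) j = f (i - 1) (i - 1) → f i j = f (i - 1) (i - 1) - 1

/-!
The domain of an `(n, N+1, 0)` F-sequence is that of an `(n, N, N)` F-sequence plus the single
cell `(N+1, 0)`, and both have diagonal `0, …, N`. Every constraint at an old cell only reads
rows `≤ N`, which the extension leaves untouched, so it is inherited. At the new cell the
entries in column `-1` vanish, so `L_f(N+1, 0) = max(0, f_{N,0} - 1)` and
`U_f(N+1, 0) = f_{N,0}`; all three prescribed values lie in this range, and the only one
forced by condition (3) is `f_{N,N} - 1`, which is admissible because `f_{N,N} > 0`.
-/

def setEntry (f : ℤ → ℤ → ℤ) (a b v : ℤ) : ℤ → ℤ → ℤ :=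
  fun i j => if i = a ∧ j = b then v else f i j

section setEntry

variable {f : ℤ → ℤ → ℤ} {a b v i j : ℤ}

lemma setEntry_self : setEntry f a b v a b = v := if_pos ⟨rfl, rfl⟩

lemma setEntry_of_ne (h : ¬(i = a ∧ j = b)) : setEntry f a b v i j = f i j := if_neg h

lemma setEntry_row_of_ne (h : i ≠ a) : setEntry f a b v i = f i :=
  funext fun _ => setEntry_of_ne fun h' => h h'.1

end setEntry

section bounds

variable {f g : ℤ → ℤ → ℤ} {i j : ℤ}

lemma Lb_congr_rows (h : g i = f i) (h' : g (i - 1) = f (i - 1)) : Lb g i j = Lb f i j := by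
  simp only [Lb, h, h']

lemma Ub_congr_rows (h : g i = f i) (h' : g (i - 1) = f (i - 1)) : Ub g i j = Ub f i j := by
  simp only [Ub, h, h']

lemma Lb_col_zero (h : f i (-1) = 0) (h' : f (i - 1) (-1) = 0) :
    Lb f i 0 = max 0 (f (i - 1) 0 - 1) := by
  simp only [Lb, zero_sub, h, h']
  omega

lemma Ub_col_zero (h : f i (-1) = 0) (h' : f (i - 1) (-1) = 0) :
    Ub f i 0 = f (i - 1) 0 := by
  simp only [Ub, zero_sub, h, h']
  omega

end bounds

lemma ValidIdx.row_le {N M i j : ℤ} (h : ValidIdx N M i j) : i ≤ N := by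
  unfold ValidIdx at h
  omega

lemma validIdx_natCast_succ_zero_iff {N : ℕ} {i j : ℤ} :
    ValidIdx ((N + 1 : ℕ) : ℤ) ((0 : ℕ) : ℤ) i j ↔
      ValidIdx N N i j ∨ (i = N + 1 ∧ j = 0) := by
  unfold ValidIdx
  push_cast
  omega

lemma IsFSeq.setEntry_new_row {n N : ℕ} {f : ℤ → ℤ → ℤ} {v : ℤ} (hf : IsFSeq n N N f)
    (hN : (N : ℤ) < 2 * n - 3) (hlo : max 0 (f N 0 - 1) ≤ v) (hhi : v ≤ f N 0)
    (hspecial : f N 0 = f N N → v = f N N - 1) :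
    IsFSeq n (N + 1) 0 (setEntry f (N + 1) 0 v) := by
  have hrow : ∀ i : ℤ, i ≤ N → setEntry f (N + 1) 0 v i = f i :=
    fun i hi => setEntry_row_of_ne (by omega)
  have hdiag :
      max (((N + 1 : ℕ) : ℤ) - 1) ((0 : ℕ) : ℤ) = max ((N : ℤ) - 1) (N : ℤ) := by
    push_cast
    omega
  have hzero : ∀ i j, ¬ValidIdx ((N + 1 : ℕ) : ℤ) ((0 : ℕ) : ℤ) i j →
      setEntry f (N + 1) 0 v i j = 0 := by
    intro i j hij
    rw [validIdx_natCast_succ_zero_iff, not_or] at hij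
    rw [setEntry_of_ne hij.2]
    exact hf.zero_outside i j hij.1
  refine ⟨Nat.zero_le _, by push_cast; omega, hzero, ?_, ?_, ?_, ?_, ?_, ?_, ?_⟩
  · intro i j
    by_cases hij : i = N + 1 ∧ j = 0
    · rw [hij.1, hij.2, setEntry_self]
      omega
    · rw [setEntry_of_ne hij]
      exact hf.nonneg i j
  · intro i h0 hi
    rw [hrow i (by omega)]
    exact hf.diag_pos i h0 (hdiag ▸ hi)
  · rw [hrow 0 (by omega)]
    exact hf.diag_first
  · intro i h1 hi
    rw [hrow i (by omega), hrow (i - 1) (by omega)]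
    exact hf.diag_step i h1 (hdiag ▸ hi)
  · intro i h0 hi
    rw [hrow i (by omega)]
    exact hf.diag_bound i h0 (hdiag ▸ hi)
  · intro i j hij hj0 hj2
    rcases validIdx_natCast_succ_zero_iff.1 hij with hold | ⟨rfl, rfl⟩
    · have hi := hold.row_le
      rw [Lb_congr_rows (hrow i hi) (hrow (i - 1) (by omega)),
        Ub_congr_rows (hrow i hi) (hrow (i - 1) (by omega)), hrow i hi]
      exact hf.bounds i j hold hj0 hj2
    · have hcol : ∀ i, setEntry f (N + 1) 0 v i (-1) = 0 :=
        fun i => hzero i (-1) (by unfold ValidIdx; omega)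
      rw [Lb_col_zero (hcol _) (hcol _), Ub_col_zero (hcol _) (hcol _), setEntry_self,
        add_sub_cancel_right, hrow N le_rfl]
      exact ⟨hlo, hhi⟩
  · intro i j hij hj0 hj1 heq
    rcases validIdx_natCast_succ_zero_iff.1 hij with hold | ⟨rfl, rfl⟩
    · have hi := hold.row_le
      rw [hrow (i - 1) (by omega)] at heq ⊢
      rw [hrow i hi]
      exact hf.special i j hold hj0 hj1 heq
    · rw [add_sub_cancel_right, hrow N le_rfl] at heq ⊢
      rw [setEntry_self]
      exact hspecial heq

/-- extending an `(n,N,N)` F-sequence (with `N < 2n-3`) at the first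
entry `(N+1,0)` of a new row, by `f_{N,N} - 1` if `f_{N,0} = f_{N,N}` and otherwise by
either `max(0, f_{N,0} - 1)` or `f_{N,0}`, yields an `(n,N+1,0)` F-sequence. -/
theorem fseq_extend_new_row (n N : ℕ) (f : ℤ → ℤ → ℤ)
    (hf : IsFSeq n N N f) (hN : (N : ℤ) < 2 * (n : ℤ) - 3) :
    (f (N : ℤ) 0 = f (N : ℤ) (N : ℤ) →
      IsFSeq n (N + 1) 0
        (fun i j => if i = (N : ℤ) + 1 ∧ j = 0 then
          f (N : ℤ) (N : ℤ) - 1 else f i j)) ∧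
    (f (N : ℤ) 0 ≠ f (N : ℤ) (N : ℤ) →
      ∀ v : ℤ, (v = max 0 (f (N : ℤ) 0 - 1) ∨ v = f (N : ℤ) 0) →
        IsFSeq n (N + 1) 0
          (fun i j => if i = (N : ℤ) + 1 ∧ j = 0 then v else f i j)) := by
  have hcol : 0 ≤ f N 0 := hf.nonneg _ _
  have hdiag : 0 < f N N := hf.diag_pos N (by positivity) (le_max_right _ _)
  refine ⟨fun heq => hf.setEntry_new_row hN (by omega) (by omega) fun _ => rfl,
    fun hne v hv => hf.setEntry_new_row hN ?_ ?_ fun h => absurd h hne⟩ <;>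
  rcases hv with rfl | rfl <;> omega
end

section
/- Let n ≥ 2 and let F be an (n, 2n−3, 2n−3) F-sequence. Then F_{i,i−2} ≤ F_{i,i−1} for all 2 ≤ i ≤ 2n−3, and consequently F is an F-matrix of size 2n−2. -/
/-- An **F**-matrix of size `2n-2` (for a fully heterochronous ranked tree shape with
`n` leaves), modeled as a function `ℤ → ℤ → ℤ` of nonnegative integer entries that
vanishes outside the index range `0 ≤ j ≤ i ≤ 2n-3`. -/
structure IsFMatrix (n : ℕ) (F : ℤ → ℤ → ℤ) : Prop where
  nonneg : ∀ i j : ℤ, 0 ≤ F i j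
  zero_outside : ∀ i j : ℤ, j < 0 ∨ i < j ∨ 2 * (n : ℤ) - 3 < i → F i j = 0
  row_mono : ∀ i j : ℤ, 1 ≤ j → j ≤ i → i ≤ 2 * (n : ℤ) - 3 → F i (j - 1) ≤ F i j
  col_lb : ∀ i j : ℤ, 0 ≤ j → j < i → i ≤ 2 * (n : ℤ) - 3 → F (i - 1) j - 1 ≤ F i j
  col_ub : ∀ i j : ℤ, 0 ≤ j → j < i → i ≤ 2 * (n : ℤ) - 3 → F i j ≤ F (i - 1) j
  diag_pos : ∀ i : ℤ, 0 ≤ i → i ≤ 2 * (n : ℤ) - 3 → 0 < F i i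
  diag_first : F 0 0 = 2
  diag_step : ∀ i : ℤ, 0 < i → i < 2 * (n : ℤ) - 3 →
      F i i = F (i - 1) (i - 1) + 1 ∨ F i i = F (i - 1) (i - 1) - 1
  diag_last : F (2 * (n : ℤ) - 3) (2 * (n : ℤ) - 3) = 1
  subdiag : ∀ i : ℤ, 1 ≤ i → i ≤ 2 * (n : ℤ) - 3 → F i (i - 1) = F (i - 1) (i - 1) - 1
  inner_lb : ∀ i j : ℤ, 2 ≤ i → i ≤ 2 * (n : ℤ) - 3 → 1 ≤ j → j ≤ i - 2 →
      F i (j - 1) + F (i - 1) j - F (i - 1) (j - 1) - 1 ≤ F i j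
  inner_ub : ∀ i j : ℤ, 2 ≤ i → i ≤ 2 * (n : ℤ) - 3 → 1 ≤ j → j ≤ i - 2 →
      F i j ≤ F i (j - 1) + F (i - 1) j - F (i - 1) (j - 1)

/-! The only entries not read off directly from the F-sequence constraints are those on
the subdiagonal, where the rule `F_{i-1,j} = F_{i-1,i-1} → F_{i,j} = F_{i-1,i-1} - 1` gives
`F_{i,i-1} = F_{i-1,i-1} - 1`, and the row step `F_{i,i-2} ≤ F_{i,i-1}`. For the latter,
look at the diagonal at `i-1`. If it rises, `F_{i,i-2} ≤ F_{i-1,i-2} = F_{i-2,i-2} - 1`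
is already below `F_{i,i-1} = F_{i-2,i-2}`. If it falls, `F_{i-1,i-2} = F_{i-1,i-1}`, so
the same rule forces `F_{i,i-2} = F_{i-1,i-1} - 1 = F_{i,i-1}`. The last diagonal entry is
`1` because it is positive and bounded by `2n - (2n-3) - 2`. -/

namespace ValidIdx

variable {N M i j k : ℤ}

theorem nonneg (h : ValidIdx N M i j) : 0 ≤ j := by
  unfold ValidIdx at h; omega

theorem le (h : ValidIdx N M i j) (hMN : M ≤ N) : j ≤ i := by
  unfold ValidIdx at h; omega

theorem of_le (h : ValidIdx N M i j) (hk : 0 ≤ k) (hkj : k ≤ j) : ValidIdx N M i k := by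
  unfold ValidIdx at *; omega

theorem sub_one (h : ValidIdx N M i j) (hji : j < i) : ValidIdx N M (i - 1) j := by
  unfold ValidIdx at *; omega

theorem le_max (h : ValidIdx N M i i) : i ≤ max (N - 1) M := by
  unfold ValidIdx at h; omega

end ValidIdx

theorem validIdx_self_iff {N i j : ℤ} : ValidIdx N N i j ↔ 0 ≤ j ∧ j ≤ i ∧ i ≤ N := by
  unfold ValidIdx; omega

namespace IsFSeq

variable {n N M : ℕ} {f : ℤ → ℤ → ℤ} {i j : ℤ}

theorem subdiag_eq (hf : IsFSeq n N M f) (hv : ValidIdx N M i (i - 1)) :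
    f i (i - 1) = f (i - 1) (i - 1) - 1 :=
  hf.special i (i - 1) hv hv.nonneg le_rfl rfl

theorem row_mono_of_le_sub_two (hf : IsFSeq n N M f) (hv : ValidIdx N M i j)
    (hj : j ≤ i - 2) : f i (j - 1) ≤ f i j :=
  (le_max_left _ _).trans (hf.bounds i j hv hv.nonneg hj).1

theorem col_lb_of_le_sub_two (hf : IsFSeq n N M f) (hv : ValidIdx N M i j)
    (hj : j ≤ i - 2) : f (i - 1) j - 1 ≤ f i j :=
  ((le_max_left _ _).trans (le_max_right _ _)).trans (hf.bounds i j hv hv.nonneg hj).1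

theorem col_ub_of_le_sub_two (hf : IsFSeq n N M f) (hv : ValidIdx N M i j)
    (hj : j ≤ i - 2) : f i j ≤ f (i - 1) j :=
  (hf.bounds i j hv hv.nonneg hj).2.trans (min_le_left _ _)

theorem inner_lb (hf : IsFSeq n N M f) (hv : ValidIdx N M i j) (hj : j ≤ i - 2) :
    f i (j - 1) + f (i - 1) j - f (i - 1) (j - 1) - 1 ≤ f i j :=
  ((le_max_right _ _).trans (le_max_right _ _)).trans (hf.bounds i j hv hv.nonneg hj).1

theorem inner_ub (hf : IsFSeq n N M f) (hv : ValidIdx N M i j) (hj : j ≤ i - 2) :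
    f i j ≤ f i (j - 1) + f (i - 1) j - f (i - 1) (j - 1) :=
  (hf.bounds i j hv hv.nonneg hj).2.trans (min_le_right _ _)

theorem col_lb (hf : IsFSeq n N M f) (hv : ValidIdx N M i j) (hji : j < i) :
    f (i - 1) j - 1 ≤ f i j := by
  rcases (by omega : j = i - 1 ∨ j ≤ i - 2) with rfl | hj
  · exact (hf.subdiag_eq hv).ge
  · exact hf.col_lb_of_le_sub_two hv hj

theorem col_ub (hf : IsFSeq n N M f) (hv : ValidIdx N M i j) (hji : j < i) :
    f i j ≤ f (i - 1) j := by
  rcases (by omega : j = i - 1 ∨ j ≤ i - 2) with rfl | hj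
  · rw [hf.subdiag_eq hv]; omega
  · exact hf.col_ub_of_le_sub_two hv hj

theorem le_subdiag (hf : IsFSeq n N M f) (hv : ValidIdx N M i (i - 1)) (hi : 2 ≤ i) :
    f i (i - 2) ≤ f i (i - 1) := by
  have hv₂ : ValidIdx N M i (i - 2) := hv.of_le (by omega) (by omega)
  have hprev : f (i - 1) (i - 2) = f (i - 2) (i - 2) - 1 := by
    have h := hf.subdiag_eq (i := i - 1)
    rw [show i - 1 - 1 = i - 2 by ring] at h
    exact h (hv₂.sub_one (by omega))
  rw [hf.subdiag_eq hv]
  rcases hf.diag_step (i - 1) (by omega) (hv.sub_one (by omega)).le_max with hup | hdown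
  · rw [show i - 1 - 1 = i - 2 by ring] at hup
    linarith [hf.col_ub_of_le_sub_two hv₂ le_rfl]
  · rw [show i - 1 - 1 = i - 2 by ring] at hdown
    exact (hf.special i (i - 2) hv₂ hv₂.nonneg (by omega) (by omega)).le

theorem row_mono (hf : IsFSeq n N M f) (hv : ValidIdx N M i j) (hj : 1 ≤ j) :
    f i (j - 1) ≤ f i j := by
  rcases (by have := hv.le (by exact_mod_cast hf.hMN); omega : j = i ∨ j = i - 1 ∨ j ≤ i - 2) with rfl | rfl | hj'
  · rw [hf.subdiag_eq (hv.of_le (by omega) (by omega))]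
    rcases hf.diag_step j hj hv.le_max with h | h <;> omega
  · rw [show i - 1 - 1 = i - 2 by ring]
    exact hf.le_subdiag hv (by omega)
  · exact hf.row_mono_of_le_sub_two hv hj'

theorem isFMatrix (hf : IsFSeq n N N f) (hN : (N : ℤ) = 2 * n - 3) : IsFMatrix n f := by
  have hv : ∀ i j : ℤ, 0 ≤ j → j ≤ i → i ≤ 2 * (n : ℤ) - 3 → ValidIdx N N i j :=
    fun i j h0 hji hi => validIdx_self_iff.2 ⟨h0, hji, hN ▸ hi⟩
  have hmax : max ((N : ℤ) - 1) N = 2 * n - 3 := by omega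
  refine
    { nonneg := hf.nonneg
      zero_outside := fun i j h => hf.zero_outside i j (by rw [validIdx_self_iff]; omega)
      row_mono := fun i j hj hji hi => hf.row_mono (hv i j (by omega) hji hi) hj
      col_lb := fun i j hj hji hi => hf.col_lb (hv i j hj hji.le hi) hji
      col_ub := fun i j hj hji hi => hf.col_ub (hv i j hj hji.le hi) hji
      diag_pos := fun i h0 hi => hf.diag_pos i h0 (hmax ▸ hi)
      diag_first := hf.diag_first
      diag_step := fun i h0 hi => hf.diag_step i h0 (by omega)
      diag_last := ?_
      subdiag := fun i h1 hi => hf.subdiag_eq (hv i (i - 1) (by omega) (by omega) hi)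
      inner_lb := fun i j _ hi hj1 hj => hf.inner_lb (hv i j (by omega) (by omega) hi) hj
      inner_ub := fun i j _ hi hj1 hj => hf.inner_ub (hv i j (by omega) (by omega) hi) hj }
  have hpos := hf.diag_pos (2 * n - 3) (by omega) (by omega)
  have hle := hf.diag_bound (2 * n - 3) (by omega) (by omega)
  omega

end IsFSeq

theorem fseq_is_fmatrix_general (n : ℕ) (F : ℤ → ℤ → ℤ)
    (hF : IsFSeq n (2 * n - 3) (2 * n - 3) F) :
    (∀ i : ℤ, 2 ≤ i → i ≤ 2 * (n : ℤ) - 3 → F i (i - 2) ≤ F i (i - 1)) ∧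
    IsFMatrix n F := by
  have hN : ((2 * n - 3 : ℕ) : ℤ) = 2 * n - 3 := by have := hF.hN2n; omega
  refine ⟨fun i h2 hi => hF.le_subdiag ?_ h2, hF.isFMatrix hN⟩
  exact validIdx_self_iff.2 ⟨by omega, by omega, by omega⟩

/-- an `(n, 2n-3, 2n-3)` F-sequence satisfies
`F_{i,i-2} ≤ F_{i,i-1}` for `2 ≤ i ≤ 2n-3`, and consequently is an F-matrix of
size `2n-2`. -/
theorem fseq_is_fmatrix (n : ℕ) (hn : 2 ≤ n) (F : ℤ → ℤ → ℤ)
    (hF : IsFSeq n (2 * n - 3) (2 * n - 3) F) :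
    (∀ i : ℤ, 2 ≤ i → i ≤ 2 * (n : ℤ) - 3 → F i (i - 2) ≤ F i (i - 1)) ∧
    IsFMatrix n F :=
  fseq_is_fmatrix_general n F hF
end
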